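/- Suppose X is a metric space, K ⊆ X × 𝕊¹ is closed and rotation-coherent, and there is an integer h ≥ 1 such that card(K_y) = h for every y ∈ X. Then the restriction to K of the first-coordinate projection, π : K → X with π(x,θ) = x, is a covering map (each point of X has an evenly covered neighborhood, and each fiber of π has exactly h points). (This is the claim in the proof of the Proposition on skew products that (K,π) is an h-fold covering of M.) -/

import Mathlib

/-!
Rotation-coherence makes the rotations `α` with `G_α(K) = K` a subgroup `D` of the circle, and
every fiber `K_y` a coset of `D`. So `D` has `h` elements, hence is the `h`-torsion subgroup, and
`(y, θ) ∈ K` iff `h • θ = g y`, where `g y = h • θ` for any `θ ∈ K_y`. Thus `K` is the pullback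
along `g` of the `h`-fold covering `θ ↦ h • θ` of the circle. The function `g` is continuous
because the projection `K → X` is a closed map (the circle being compact), and pullbacks of
covering maps are covering maps.
-/

open Topology

theorem IsCoveringMap.pullback {X Y E : Type*} [TopologicalSpace X] [TopologicalSpace Y]
    [TopologicalSpace E] {q : E → Y} (hq : IsCoveringMap q) {g : X → Y} (hg : Continuous g) :
    IsCoveringMap (fun p : {p : X × E | g p.1 = q p.2} => p.1.1) := by
  intro x
  obtain ⟨hI, V, hxV, hV, -, H, hH⟩ := hq (g x)
  have hqH : ∀ w, q (H.symm w) = w.1 := fun w => by rw [← hH, H.apply_symm_apply]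
  have hmem : ∀ p : {p : X × E | g p.1 = q p.2}, g p.1.1 ∈ V → q p.1.2 ∈ V := fun p hp => p.2 ▸ hp
  refine IsEvenlyCovered.to_isEvenlyCovered_preimage
    ⟨hI, g ⁻¹' V, hxV, hV.preimage hg, hV.preimage (hg.comp (by fun_prop)),
      { toFun e := (⟨e.1.1.1, e.2⟩, (H ⟨e.1.1.2, hmem e.1 e.2⟩).2)
        invFun u := ⟨⟨(u.1.1, H.symm (⟨g u.1, u.1.2⟩, u.2)), by simp [hqH]⟩, u.1.2⟩
        left_inv e := by
          have hHe : ((⟨g e.1.1.1, e.2⟩ : V), (H ⟨e.1.1.2, hmem e.1 e.2⟩).2) =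
              H ⟨e.1.1.2, hmem e.1 e.2⟩ :=
            Prod.ext (Subtype.ext (by rw [hH]; exact e.1.2)) rfl
          ext
          · rfl
          · simp only [hHe, Homeomorph.symm_apply_apply]
        right_inv u := by simp
        continuous_toFun := by fun_prop
        continuous_invFun := by fun_prop }, fun _ => rfl⟩

theorem continuous_of_forall_mem_apply_fst_eq {X Y Z : Type*} [TopologicalSpace X]
    [TopologicalSpace Y] [TopologicalSpace Z] [CompactSpace Y] {K : Set (X × Y)}
    (hK : IsClosed K) (hsurj : ∀ x, ∃ y, (x, y) ∈ K) {f : Y → Z} (hf : Continuous f)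
    {g : X → Z} (hg : ∀ p ∈ K, g p.1 = f p.2) : Continuous g := by
  have hπ : IsQuotientMap (K.domRestrict Prod.fst) :=
    (isClosedMap_fst_of_compactSpace.domRestrict hK).isQuotientMap (by fun_prop)
      fun x => (hsurj x).elim fun y hy => ⟨⟨(x, y), hy⟩, rfl⟩
  rw [hπ.continuous_iff]
  exact (hf.comp (continuous_snd.comp continuous_subtype_val)).congr fun p => (hg p p.2).symm

theorem natCard_fst_preimage_singleton {X Y : Type*} (K : Set (X × Y)) (x : X) :
    Nat.card ((fun k : K => k.1.1) ⁻¹' {x}) = {y | (x, y) ∈ K}.ncard := by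
  rw [← Nat.card_coe_set_eq]
  exact Nat.card_congr
    { toFun k := ⟨k.1.1.2, by obtain ⟨⟨⟨x', y⟩, hy⟩, rfl⟩ := k; exact hy⟩
      invFun y := ⟨⟨(x, y), y.2⟩, rfl⟩
      left_inv := by rintro ⟨⟨⟨x', y⟩, hy⟩, rfl⟩; rfl
      right_inv y := rfl }

section RotationCoherent

variable {X G : Type*} [AddCommGroup G]

def fiberRotation (α : G) (p : X × G) : X × G := (p.1, p.2 + α)

lemma fiberRotation_zero : (fiberRotation 0 : X × G → X × G) = id := by
  funext p
  simp [fiberRotation]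

lemma fiberRotation_add (α β : G) :
    (fiberRotation (α + β) : X × G → X × G) = fiberRotation β ∘ fiberRotation α := by
  funext p
  simp [fiberRotation, add_assoc]

def IsRotationCoherent (K : Set (X × G)) : Prop :=
  ∀ α : G, (fiberRotation α '' K ∩ K).Nonempty → fiberRotation α '' K = K

def rotationStabilizer (K : Set (X × G)) : AddSubgroup G where
  carrier := {α | fiberRotation α '' K = K}
  zero_mem' := show fiberRotation 0 '' K = K by rw [fiberRotation_zero, Set.image_id]
  add_mem' {α β} hα hβ := show fiberRotation (α + β) '' K = K by
    rw [fiberRotation_add, Set.image_comp, show fiberRotation α '' K = K from hα, hβ]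
  neg_mem' {α} hα := show fiberRotation (-α) '' K = K by
    conv_lhs => rw [← show fiberRotation α '' K = K from hα, ← Set.image_comp,
      ← fiberRotation_add, add_neg_cancel, fiberRotation_zero, Set.image_id]

variable {K : Set (X × G)}

lemma fiberRotation_mem_of_mem_rotationStabilizer {α : G} (hα : α ∈ rotationStabilizer K)
    {p : X × G} (hp : p ∈ K) : fiberRotation α p ∈ K :=
  (hα : fiberRotation α '' K = K) ▸ Set.mem_image_of_mem _ hp

lemma IsRotationCoherent.sub_mem_rotationStabilizer (hK : IsRotationCoherent K) {y : X}
    {θ θ' : G} (hθ : (y, θ) ∈ K) (hθ' : (y, θ') ∈ K) : θ' - θ ∈ rotationStabilizer K :=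
  hK _ ⟨(y, θ'), ⟨(y, θ), hθ, by simp [fiberRotation]⟩, hθ'⟩

lemma IsRotationCoherent.mem_iff_sub_mem (hK : IsRotationCoherent K) {y : X} {θ θ' : G}
    (hθ : (y, θ) ∈ K) : (y, θ') ∈ K ↔ θ' - θ ∈ rotationStabilizer K := by
  refine ⟨hK.sub_mem_rotationStabilizer hθ, fun hα => ?_⟩
  simpa [fiberRotation] using fiberRotation_mem_of_mem_rotationStabilizer hα hθ

lemma IsRotationCoherent.encard_fiber (hK : IsRotationCoherent K) {y : X} {θ : G}
    (hθ : (y, θ) ∈ K) :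
    {θ' | (y, θ') ∈ K}.encard = (rotationStabilizer K : Set G).encard := by
  have hfiber : {θ' | (y, θ') ∈ K} = (· + θ) '' (rotationStabilizer K : Set G) := by
    ext θ'
    simp [Set.image_add_right, hK.mem_iff_sub_mem hθ, sub_eq_add_neg]
  rw [hfiber, (add_left_injective θ).encard_image]

end RotationCoherent

theorem AddCircle.coe_addSubgroup_eq_torsion {p : ℝ} [Fact (0 < p)] {n : ℕ} (hn : n ≠ 0)
    (D : AddSubgroup (AddCircle p)) (hD : (D : Set (AddCircle p)).encard = n) :
    (D : Set (AddCircle p)) = {u | n • u = 0} := by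
  have hcard : Nat.card D = n := by
    rw [show Nat.card D = (D : Set (AddCircle p)).ncard from Nat.card_coe_set_eq _,
      Set.ncard_def, hD, ENat.toNat_natCast]
  refine (Set.finite_of_encard_eq_coe hD).eq_of_subset_of_encard_le (fun u hu => ?_) ?_
  · simpa [hcard] using congrArg Subtype.val (card_nsmul_eq_zero' (x := (⟨u, hu⟩ : D)))
  · rw [hD]
    exact AddCircle.card_torsion_le_of_isSMulRegular p n hn
      (.of_right_eq_zero_of_smul fun _ ↦ by simp [hn])

/-- Let `𝕊¹ = ℝ/ℤ` and `X` a metric space. Suppose `K ⊆ X × 𝕊¹` is closed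
and rotation-coherent, and there is an integer `h ≥ 1` with `card(K_y) = h` for every
`y ∈ X`. Then the restriction to `K` of the first-coordinate projection `π : K → X`,
`π(x,θ) = x`, is a covering map, and each fiber of `π` has exactly `h` points. -/
theorem stmt8_projection_is_covering_map
    {X : Type*} [MetricSpace X]
    (K : Set (X × AddCircle (1 : ℝ)))
    (hK_cl : IsClosed K)
    (hK_rot : ∀ α : AddCircle (1 : ℝ),
      ((fun p : X × AddCircle (1 : ℝ) => (p.1, p.2 + α)) '' K ∩ K).Nonempty →
      (fun p : X × AddCircle (1 : ℝ) => (p.1, p.2 + α)) '' K = K)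
    (h : ℕ) (hh : 1 ≤ h)
    (h_card : ∀ y : X, {θ : AddCircle (1 : ℝ) | (y, θ) ∈ K}.ncard = h) :
    IsCoveringMap (fun k : K => (k : X × AddCircle (1 : ℝ)).1) ∧
    ∀ x : X, Nat.card ((fun k : K => (k : X × AddCircle (1 : ℝ)).1) ⁻¹' {x}) = h := by
  have hK : IsRotationCoherent K := hK_rot
  have hpos : ∀ y, 0 < {θ | (y, θ) ∈ K}.ncard := fun y => h_card y ▸ hh
  have hfin : ∀ y, {θ | (y, θ) ∈ K}.Finite := fun y => Set.finite_of_ncard_pos (hpos y)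
  choose ξ hξ using fun y => Set.nonempty_of_ncard_ne_zero (hpos y).ne'
  have hKeq : K = {p | h • ξ p.1 = h • p.2} := by
    ext ⟨y, θ⟩
    have hD := AddCircle.coe_addSubgroup_eq_torsion (n := h) (by omega) (rotationStabilizer K)
      (by rw [← hK.encard_fiber (hξ y), ← (hfin y).cast_ncard_eq, h_card])
    rw [hK.mem_iff_sub_mem (hξ y), ← SetLike.mem_coe, hD]
    simp only [Set.mem_ofPred_eq, smul_sub, sub_eq_zero, eq_comm]
  have hg : Continuous fun y => h • ξ y :=
    continuous_of_forall_mem_apply_fst_eq hK_cl (fun y => ⟨ξ y, hξ y⟩) (continuous_nsmul h)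
      fun p hp => by rw [hKeq] at hp; exact hp
  refine ⟨?_, fun x => by rw [natCard_fst_preimage_singleton, h_card]⟩
  have : NeZero h := ⟨by omega⟩
  rw [hKeq]
  exact (AddCircle.isAddQuotientCoveringMap_nsmul_of_ne_zero (1 : ℝ) h).isCoveringMap.pullback hg
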